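/- arXiv:1302.1340 — 2 statements merged into one kernel-verified Lean document; each statement's English description precedes it below -/
import Mathlib

section
/- For every f ∈ F there exists a unique continuous function f̂ : δX → ℂ such that f = f̂ ∘ e. -/
open Set

variable {X : Type*} [Nonempty X] [TopologicalSpace X] [DiscreteTopology X]

/-- The set `X(f,r) = {x ∈ X : |f(x)| ≤ r}`. -/
def XSet (f : BoundedContinuousFunction X ℂ) (r : ℝ) : Set X := {x | ‖f x‖ ≤ r}

/-- An `F`-family on `X`: a nonempty collection of nonempty subsets of `X` such that for every
member `A ≠ X` there are `B` in the collection and `f ∈ F` with `f(B) = {0}`,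
`f(X \ A) = {1}`. -/
def FFamily (F : StarSubalgebra ℂ (BoundedContinuousFunction X ℂ)) (𝒜 : Set (Set X)) : Prop :=
  𝒜.Nonempty ∧ (∀ A ∈ 𝒜, A.Nonempty) ∧
    ∀ A ∈ 𝒜, A ≠ Set.univ →
      ∃ B ∈ 𝒜, ∃ f ∈ F, (∀ x ∈ B, f x = 0) ∧ ∀ x ∉ A, f x = 1

/-- A filter on the set `X`, viewed as a collection of subsets. -/
def IsSetFilter (φ : Set (Set X)) : Prop :=
  φ.Nonempty ∧ (∀ A ∈ φ, ∀ B ∈ φ, A ∩ B ∈ φ) ∧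
    (∀ A ∈ φ, ∀ B : Set X, A ⊆ B → B ∈ φ) ∧ ∅ ∉ φ

/-- An `F`-filter on `X` is a filter which is also an `F`-family. -/
def FFilter (F : StarSubalgebra ℂ (BoundedContinuousFunction X ℂ)) (φ : Set (Set X)) : Prop :=
  IsSetFilter φ ∧ FFamily F φ

/-- An `F`-ultrafilter on `X` is an `F`-filter maximal with respect to inclusion. -/
def FUltrafilter (F : StarSubalgebra ℂ (BoundedContinuousFunction X ℂ)) (φ : Set (Set X)) : Prop :=
  FFilter F φ ∧ ∀ ψ : Set (Set X), FFilter F ψ → φ ⊆ ψ → ψ = φ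

/-- `F₀ = {f ∈ F : X(f,r) ≠ ∅ for all r > 0}`. -/
def FZero (F : StarSubalgebra ℂ (BoundedContinuousFunction X ℂ)) :
    Set (BoundedContinuousFunction X ℂ) :=
  {f | f ∈ F ∧ ∀ r : ℝ, 0 < r → (XSet f r).Nonempty}

/-- `Z(A) = {f ∈ F : f(x) = 0 for all x ∈ A}`. -/
def ZSet (F : StarSubalgebra ℂ (BoundedContinuousFunction X ℂ)) (A : Set X) :
    Set (BoundedContinuousFunction X ℂ) :=
  {f | f ∈ F ∧ ∀ x ∈ A, f x = 0}

/-- The finite intersection property. -/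
def FIP (𝒜 : Set (Set X)) : Prop :=
  ∀ s : Finset (Set X), ↑s ⊆ 𝒜 → s.Nonempty → (⋂₀ (s : Set (Set X))).Nonempty

/-- A filter base on `X`. -/
def IsFilterBase (ℬ : Set (Set X)) : Prop :=
  ℬ.Nonempty ∧ ∅ ∉ ℬ ∧ ∀ A ∈ ℬ, ∀ B ∈ ℬ, ∃ C ∈ ℬ, C ⊆ A ∩ B

/-- The filter generated by a filter base. -/
def genFilter (ℬ : Set (Set X)) : Set (Set X) :=
  {A | ∃ B ∈ ℬ, B ⊆ A}

/-- `δX`, the space of all `F`-ultrafilters on `X`. -/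
def Delta (F : StarSubalgebra ℂ (BoundedContinuousFunction X ℂ)) : Type _ :=
  {p : Set (Set X) // FUltrafilter F p}

/-- `Â = {p ∈ δX : A ∈ p}`. -/
def hatSet (F : StarSubalgebra ℂ (BoundedContinuousFunction X ℂ)) (A : Set X) :
    Set (Delta F) :=
  {p | A ∈ p.1}

/-- The topology on `δX` having `{Â : A ⊆ X}` as a base. -/
instance (F : StarSubalgebra ℂ (BoundedContinuousFunction X ℂ)) :
    TopologicalSpace (Delta F) :=
  TopologicalSpace.generateFrom {S | ∃ A : Set X, S = hatSet F A}

/-- For an `F`-filter `φ`, `φ̂ = {p ∈ δX : φ ⊆ p}`. -/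
def hatF (F : StarSubalgebra ℂ (BoundedContinuousFunction X ℂ)) (φ : Set (Set X)) :
    Set (Delta F) :=
  {p | φ ⊆ p.1}

/-- `τ(F)`, the weakest topology on `X` making every member of `F` continuous. -/
noncomputable def tauF (F : StarSubalgebra ℂ (BoundedContinuousFunction X ℂ)) : TopologicalSpace X :=
  ⨅ f ∈ (F : Set (BoundedContinuousFunction X ℂ)),
    TopologicalSpace.induced (fun x => f x) inferInstance

/-- `B(I) = {X(f,r) : f ∈ I, r > 0}` for an ideal `I` of `F`. -/
def BIdeal (F : StarSubalgebra ℂ (BoundedContinuousFunction X ℂ)) (I : Ideal F) :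
    Set (Set X) :=
  {S | ∃ f ∈ I, ∃ r : ℝ, 0 < r ∧ S = XSet (f : BoundedContinuousFunction X ℂ) r}

/-!
Every `F`-ultrafilter `p` is a filter on `X`, along which the bounded function `f` has a cluster
value `c`. The filter generated by `p` and the `f`-preimages of the neighbourhoods of `c` is again
an `F`-filter (the continuous functional calculus of the closed algebra `F` supplies the separating
functions), so by maximality it is `p` itself: `f` tends to `c` along `p`, and `f̂ p := c`.
If `K` is a closed neighbourhood of `f̂ p`, every ultrafilter in the open set `Â`, `A = f⁻¹(K)`,
has its limit in `K`, so `f̂` is continuous. Finally `e x` is the `τ(F)`-neighbourhood filter of `x`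
and `f` is `τ(F)`-continuous, so `f̂ (e x) = f x`; uniqueness holds because `e` has dense range.
-/

open Filter Topology TopologicalSpace

section

variable {X : Type*} [TopologicalSpace X]

lemma BoundedContinuousFunction.exists_mapClusterPt {β : Type*} [PseudoMetricSpace β]
    [ProperSpace β] (f : BoundedContinuousFunction X β) (l : Filter X) [l.NeBot] :
    ∃ c, MapClusterPt c l f :=
  let ⟨c, _, hc⟩ := f.isBounded_range.isCompact_closure.exists_mapClusterPt
    (tendsto_principal.2 (Eventually.of_forall fun x => subset_closure (mem_range_self x)))
  ⟨c, hc⟩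

lemma BoundedContinuousFunction.cfc_eval (f : BoundedContinuousFunction X ℂ) {φ : ℂ → ℂ}
    (hφ : Continuous φ) (x : X) : cfc φ f x = φ (f x) := by
  let ev : BoundedContinuousFunction X ℂ →⋆ₐ[ℂ] ℂ :=
    (ContinuousMap.evalStarAlgHom ℂ ℂ x).comp (BoundedContinuousFunction.toContinuousMapStarₐ ℂ)
  have hev : Continuous ev := (BoundedContinuousFunction.evalCLM ℂ x).continuous
  simpa [ev] using (ev.map_cfc φ f hφ.continuousOn hev).trans (cfc_algebraMap (A := ℂ) (f x) φ)

def FSeparated (F : StarSubalgebra ℂ (BoundedContinuousFunction X ℂ)) (B A : Set X) : Prop :=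
  ∃ h ∈ F, (∀ x ∈ B, h x = 0) ∧ ∀ x ∉ A, h x = 1

variable {F : StarSubalgebra ℂ (BoundedContinuousFunction X ℂ)}

lemma fSeparated_univ (B : Set X) : FSeparated F B univ :=
  ⟨0, zero_mem F, fun _ _ => rfl, fun x hx => absurd (mem_univ x) hx⟩

lemma FSeparated.mono {B A B' A' : Set X} (h : FSeparated F B A) (hB : B' ⊆ B) (hA : A ⊆ A') :
    FSeparated F B' A' :=
  let ⟨h, hF, h0, h1⟩ := h
  ⟨h, hF, fun x hx => h0 x (hB hx), fun x hx => h1 x (fun hxA => hx (hA hxA))⟩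

/-- `1 - (1 - h)(1 - k)` vanishes where both `h` and `k` do, and is `1` where either one is. -/
lemma FSeparated.inter {B A B' A' : Set X} (h : FSeparated F B A) (h' : FSeparated F B' A') :
    FSeparated F (B ∩ B') (A ∩ A') := by
  obtain ⟨h, hF, h0, h1⟩ := h
  obtain ⟨k, kF, k0, k1⟩ := h'
  refine ⟨h + k - h * k, sub_mem (add_mem hF kF) (mul_mem hF kF), ?_, ?_⟩
  · rintro x ⟨hxB, hxB'⟩
    simp [h0 x hxB, k0 x hxB']
  · intro x hx
    rcases not_and_or.1 hx with hxA | hxA'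
    · simp [h1 x hxA]
    · simp [k1 x hxA']

/-- Urysohn's lemma in `ℂ`, transported to `X` by the continuous functional calculus of `f`;
this is where `F` has to be closed. -/
lemma fSeparated_preimage (hF : IsClosed (F : Set (BoundedContinuousFunction X ℂ)))
    {f : BoundedContinuousFunction X ℂ} (hf : f ∈ F) {s u : Set ℂ} (hs : IsClosed s)
    (hu : IsOpen u) (hsu : s ⊆ u) : FSeparated F (f ⁻¹' s) (f ⁻¹' u) := by
  obtain ⟨θ, hθ0, hθ1, -⟩ := exists_continuous_zero_one_of_isClosed hs hu.isClosed_compl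
    (disjoint_compl_right_iff_subset.2 hsu)
  have hφ : Continuous fun z => (θ z : ℂ) := by fun_prop
  refine ⟨cfc (fun z => (θ z : ℂ)) f, cfc_mem (hs := hF) _ hf, fun x hx => ?_, fun x hx => ?_⟩
  · simp [f.cfc_eval hφ, hθ0 hx]
  · simp [f.cfc_eval hφ, hθ1 (show f x ∈ uᶜ from hx)]

lemma continuous_tauF {f : BoundedContinuousFunction X ℂ} (hf : f ∈ F) :
    Continuous[tauF F, _] f :=
  continuous_iff_le_induced.2 (iInf₂_le f hf)

lemma FSeparated.mem_nhds_tauF {B A : Set X} (h : FSeparated F B A) {x : X} (hx : x ∈ B) :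
    A ∈ @nhds X (tauF F) x := by
  obtain ⟨h, hF, h0, h1⟩ := h
  have hball : h ⁻¹' Metric.ball 0 1 ∈ @nhds X (tauF F) x :=
    @ContinuousAt.preimage_mem_nhds X ℂ (tauF F) _ _ _ _
      (@Continuous.continuousAt X ℂ (tauF F) _ _ x (continuous_tauF hF))
      (Metric.isOpen_ball.mem_nhds (by simp [h0 x hx]))
  refine Filter.mem_of_superset hball fun y hy => ?_
  by_contra hyA
  simp [h1 y hyA] at hy

lemma fFilter_sets_of_fSeparated {l : Filter X} [l.NeBot]
    (hl : ∀ A ∈ l, ∃ B ∈ l, FSeparated F B A) : FFilter F l.sets :=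
  ⟨⟨⟨univ, univ_mem⟩, fun _ hA _ hB => inter_mem hA hB, fun _ hA _ hAB => mem_of_superset hA hAB,
    empty_notMem l⟩, ⟨univ, univ_mem⟩, fun _ hA => nonempty_of_mem hA, fun A hA _ => hl A hA⟩

namespace Delta

def toFilter (p : Delta F) : Filter X where
  sets := p.1
  univ_sets := let ⟨A, hA⟩ := p.2.1.1.1; p.2.1.1.2.2.1 A hA univ (subset_univ A)
  sets_of_superset hA hAB := p.2.1.1.2.2.1 _ hA _ hAB
  inter_sets hA hB := p.2.1.1.2.1 _ hA _ hB

instance (p : Delta F) : p.toFilter.NeBot :=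
  ⟨fun h => p.2.1.1.2.2.2 (h ▸ mem_bot : ∅ ∈ p.toFilter)⟩

lemma exists_fSeparated (p : Delta F) {A : Set X} (hA : A ∈ p.toFilter) :
    ∃ B ∈ p.toFilter, FSeparated F B A := by
  by_cases hAX : A = univ
  · exact ⟨univ, univ_mem, hAX ▸ fSeparated_univ (F := F) univ⟩
  · exact p.2.1.2.2.2 A hA hAX

lemma eq_toFilter_of_le (p : Delta F) {l : Filter X} [l.NeBot]
    (hl : ∀ A ∈ l, ∃ B ∈ l, FSeparated F B A) (h : l ≤ p.toFilter) : l = p.toFilter :=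
  Filter.filter_eq (p.2.2 l.sets (fFilter_sets_of_fSeparated hl) h)

/-- `p ⊓ comap f (𝓝 c)` is again an `F`-filter, so by maximality it is `p`. -/
lemma tendsto_of_mapClusterPt (hF : IsClosed (F : Set (BoundedContinuousFunction X ℂ)))
    {f : BoundedContinuousFunction X ℂ} (hf : f ∈ F) (p : Delta F) {c : ℂ}
    (hc : MapClusterPt c p.toFilter f) : Tendsto f p.toFilter (𝓝 c) := by
  set l := p.toFilter ⊓ comap f (𝓝 c)
  have : l.NeBot := by
    rw [← map_neBot_iff f, Filter.push_pull, inf_comm]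
    exact hc
  have hsep : ∀ A ∈ l, ∃ B ∈ l, FSeparated F B A := by
    intro A hA
    obtain ⟨P, hP, V, hV, hPV⟩ := mem_inf_iff_superset.1 hA
    obtain ⟨W, hW, hWV⟩ := mem_comap.1 hV
    obtain ⟨r, hr, hrW⟩ := Metric.mem_nhds_iff.1 hW
    obtain ⟨B, hB, hBP⟩ := p.exists_fSeparated hP
    have hball : FSeparated F (f ⁻¹' Metric.closedBall c (r / 2)) (f ⁻¹' Metric.ball c r) :=
      fSeparated_preimage hF hf Metric.isClosed_closedBall Metric.isOpen_ball
        (Metric.closedBall_subset_ball (half_lt_self hr))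
    refine ⟨_, inter_mem_inf hB (preimage_mem_comap (Metric.closedBall_mem_nhds c (half_pos hr))),
      (hBP.inter hball).mono subset_rfl ?_⟩
    exact (inter_subset_inter_right P ((preimage_mono hrW).trans hWV)).trans hPV
  exact tendsto_iff_comap.2 ((p.eq_toFilter_of_le hsep inf_le_left).ge.trans inf_le_right)

lemma tendsto_limUnder (hF : IsClosed (F : Set (BoundedContinuousFunction X ℂ)))
    {f : BoundedContinuousFunction X ℂ} (hf : f ∈ F) (p : Delta F) :
    Tendsto f p.toFilter (𝓝 (limUnder p.toFilter f)) :=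
  let ⟨c, hc⟩ := f.exists_mapClusterPt p.toFilter
  tendsto_nhds_limUnder ⟨c, p.tendsto_of_mapClusterPt hF hf hc⟩

lemma isTopologicalBasis_hatSet : IsTopologicalBasis (range (hatSet F)) := by
  have hbasis := isTopologicalBasis_of_subbasis_of_inter (r := range (hatSet F))
    (congrArg generateFrom (ext fun _ => exists_congr fun _ => eq_comm))
    (by
      rintro _ ⟨A, rfl⟩ _ ⟨B, rfl⟩
      exact ⟨A ∩ B, ext fun p => inter_mem_iff (f := toFilter p)⟩)
  have huniv : univ ∈ range (hatSet F) :=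
    ⟨univ, eq_univ_of_forall fun p => univ_mem (f := toFilter p)⟩
  rwa [insert_eq_of_mem huniv] at hbasis

lemma continuous_of_tendsto {Y : Type*} [TopologicalSpace Y] [RegularSpace Y] {u : X → Y}
    {g : Delta F → Y} (hg : ∀ p, Tendsto u p.toFilter (𝓝 (g p))) : Continuous g := by
  refine continuous_iff_continuousAt.2 fun p => (closed_nhds_basis (g p)).tendsto_right_iff.2 ?_
  rintro s ⟨hs, hsc⟩
  filter_upwards [(isTopologicalBasis_hatSet.isOpen ⟨u ⁻¹' s, rfl⟩).mem_nhds (hg p hs)] with q hq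
  exact hsc.mem_of_tendsto (hg q) hq

lemma denseRange_of_eq_nhds {e : X → Delta F}
    (he : ∀ x, (e x).1 = {A | A ∈ @nhds X (tauF F) x}) : DenseRange e := by
  refine isTopologicalBasis_hatSet.dense_iff.2 ?_
  rintro _ ⟨A, rfl⟩ ⟨p, hp⟩
  obtain ⟨B, hB, hBA⟩ := p.exists_fSeparated hp
  obtain ⟨x, hx⟩ := Filter.nonempty_of_mem hB
  exact ⟨e x, show A ∈ (e x).1 by rw [he]; exact hBA.mem_nhds_tauF hx, x, rfl⟩

lemma tendsto_of_eq_nhds {e : X → Delta F}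
    (he : ∀ x, (e x).1 = {A | A ∈ @nhds X (tauF F) x}) {f : BoundedContinuousFunction X ℂ}
    (hf : f ∈ F) (x : X) : Tendsto f (e x).toFilter (𝓝 (f x)) := by
  rw [show (e x).toFilter = @nhds X (tauF F) x from Filter.filter_eq (he x)]
  exact @Continuous.tendsto X ℂ (tauF F) _ _ (continuous_tauF hf) x

end Delta

end

theorem stmt13 (F : StarSubalgebra ℂ (BoundedContinuousFunction X ℂ)) (hF : IsClosed (F : Set (BoundedContinuousFunction X ℂ))) (e : X → Delta F) (he : ∀ x : X, (e x).1 = {A : Set X | A ∈ @nhds X (tauF F) x})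
    (f : BoundedContinuousFunction X ℂ) (hf : f ∈ F) :
    ∃! g : C(Delta F, ℂ), ∀ x : X, f x = g (e x) := by
  set g := fun p : Delta F => limUnder p.toFilter f
  have hlim : ∀ p, Tendsto f p.toFilter (𝓝 (g p)) := Delta.tendsto_limUnder hF hf
  have hg : Continuous g := Delta.continuous_of_tendsto hlim
  have hfg : ∀ x, f x = g (e x) := fun x =>
    tendsto_nhds_unique (Delta.tendsto_of_eq_nhds he hf x) (hlim (e x))
  refine ⟨⟨g, hg⟩, hfg, fun g' hg' => ContinuousMap.coe_injective ?_⟩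
  exact (Delta.denseRange_of_eq_nhds he).equalizer g'.continuous hg
    (funext fun x => (hg' x).symm.trans (hfg x))
end

section
/- If φ is an F-filter on X, then there exists a closed, proper ideal I of F such that φ is the filter generated by B(I). Conversely, if I is a closed, proper ideal of F, then B(I) is a filter base on X and the filter on X generated by B(I) is an F-filter. -/
open Set

variable {X : Type*} [Nonempty X] [TopologicalSpace X] [DiscreteTopology X]

/-! An `F`-filter `φ` determines the ideal of those `f ∈ F` that tend to `0` along `φ`; the
`F`-family property shows that every member of `φ` contains some `X(f, 1/2)` with `f` in this
ideal. Conversely, for a proper ideal `I` the sets `X(f, r)` are nonempty, since a function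
bounded away from `0` is invertible in `X →ᵇ ℂ` and hence, by spectral permanence, in the closed
subalgebra `F`; they are directed because `X(|f|² + |g|², t²) ⊆ X(f, t) ∩ X(g, t)`; and the
continuous functional calculus of `F`, applied to a ramp in `|g|`, produces the functions
separating `X(g, r/2)` from the complement of `X(g, r)`. -/

open Filter Topology BoundedContinuousFunction

section

variable {α : Type*}

lemma IsFilterBase.isSetFilter_genFilter {ℬ : Set (Set α)} (h : IsFilterBase ℬ) :
    IsSetFilter (genFilter ℬ) := by
  obtain ⟨⟨B, hB⟩, hempty, hdir⟩ := h
  refine ⟨⟨B, B, hB, subset_rfl⟩, ?_, ?_, ?_⟩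
  · rintro A₁ ⟨B₁, hB₁, h₁⟩ A₂ ⟨B₂, hB₂, h₂⟩
    obtain ⟨C, hC, hCB⟩ := hdir B₁ hB₁ B₂ hB₂
    exact ⟨C, hC, hCB.trans (inter_subset_inter h₁ h₂)⟩
  · rintro A ⟨B, hB, hBA⟩ A' hAA'
    exact ⟨B, hB, hBA.trans hAA'⟩
  · rintro ⟨B, hB, hB0⟩
    exact hempty (subset_empty_iff.1 hB0 ▸ hB)

def IsSetFilter.toFilter {φ : Set (Set α)} (hφ : IsSetFilter φ) : Filter α where
  sets := φ
  univ_sets := hφ.1.elim fun A hA => hφ.2.2.1 A hA _ (subset_univ A)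
  sets_of_superset hA hAB := hφ.2.2.1 _ hA _ hAB
  inter_sets hA hB := hφ.2.1 _ hA _ hB

lemma IsSetFilter.neBot_toFilter {φ : Set (Set α)} (hφ : IsSetFilter φ) : hφ.toFilter.NeBot :=
  ⟨fun h => hφ.2.2.2 (empty_mem_iff_bot.2 h)⟩

end

section

variable {α : Type*} [TopologicalSpace α]

lemma tendsto_nhds_zero_iff_XSet_mem (f : α →ᵇ ℂ) (l : Filter α) :
    Tendsto f l (𝓝 0) ↔ ∀ r > 0, XSet f r ∈ l := by
  simp only [Metric.nhds_basis_closedBall.tendsto_right_iff, Metric.mem_closedBall, dist_zero_right]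
  rfl

lemma BoundedContinuousFunction.isClosed_setOf_tendsto {β : Type*} [PseudoMetricSpace β]
    (l : Filter α) (c : β) : IsClosed {f : α →ᵇ β | Tendsto f l (𝓝 c)} := by
  refine isClosed_of_closure_subset fun f hf => Metric.tendsto_nhds.2 fun ε hε => ?_
  obtain ⟨g, hg, hfg⟩ := Metric.mem_closure_iff.1 hf (ε / 2) (half_pos hε)
  filter_upwards [Metric.tendsto_nhds.1 hg (ε / 2) (half_pos hε)] with x hx
  calc dist (f x) c ≤ dist (f x) (g x) + dist (g x) c := dist_triangle _ _ _
    _ < ε := by linarith [(dist_coe_le_dist x).trans_lt hfg]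

lemma BoundedContinuousFunction.isUnit_of_le_norm {𝕜 : Type*} [NormedField 𝕜] {f : α →ᵇ 𝕜}
    {r : ℝ} (hr : 0 < r) (hf : ∀ x, r ≤ ‖f x‖) : IsUnit f := by
  have hne : ∀ x, f x ≠ 0 := fun x h => by simpa [h] using hr.trans_le (hf x)
  let g : α →ᵇ 𝕜 := ofNormedAddCommGroup (fun x => (f x)⁻¹) (f.continuous.inv₀ hne) r⁻¹
    fun x => by simpa only [norm_inv] using inv_anti₀ hr (hf x)
  exact IsUnit.of_mul_eq_one (b := g) (ext fun x => mul_inv_cancel₀ (hne x))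

noncomputable def BoundedContinuousFunction.evalStarAlgHom (x : α) : (α →ᵇ ℂ) →⋆ₐ[ℂ] ℂ where
  toFun f := f x
  map_one' := rfl
  map_mul' _ _ := rfl
  map_zero' := rfl
  map_add' _ _ := rfl
  commutes' _ := rfl
  map_star' _ := rfl

lemma BoundedContinuousFunction.cfc_apply_apply (ψ : ℂ → ℂ) (hψ : Continuous ψ) (f : α →ᵇ ℂ)
    (x : α) : cfc ψ f x = ψ (f x) := by
  have h := cfc_algebraMap (A := ℂ) (f x) ψ
  simp only [Algebra.algebraMap_self, RingHom.id_apply] at h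
  exact ((evalStarAlgHom x).map_cfc ψ f hψ.continuousOn (continuous_eval_const x)).trans h

lemma StarSubalgebra.exists_mem_eq_zero_eq_one (F : StarSubalgebra ℂ (α →ᵇ ℂ))
    (hF : IsClosed (F : Set (α →ᵇ ℂ))) {g : α →ᵇ ℂ} (hg : g ∈ F) {s t : ℝ} (hst : s < t) :
    ∃ f ∈ F, (∀ x, ‖g x‖ ≤ s → f x = 0) ∧ (∀ x, t ≤ ‖g x‖ → f x = 1) := by
  set ψ : ℂ → ℂ := fun z => ((min 1 (max 0 ((‖z‖ - s) / (t - s))) : ℝ) : ℂ)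
  have hψ : Continuous ψ := by fun_prop
  refine ⟨cfc ψ g, cfc_mem (hs := hF) ψ hg, fun x hx => ?_, fun x hx => ?_⟩
  · have : (‖g x‖ - s) / (t - s) ≤ 0 := div_nonpos_of_nonpos_of_nonneg (by linarith) (by linarith)
    simp [cfc_apply_apply ψ hψ, ψ, max_eq_left this]
  · have : 1 ≤ (‖g x‖ - s) / (t - s) := by rw [one_le_div (by linarith)]; linarith
    simp [cfc_apply_apply ψ hψ, ψ, this]

end


section

variable {α : Type*} [TopologicalSpace α] (F : StarSubalgebra ℂ (α →ᵇ ℂ))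

def tendstoZeroIdeal (l : Filter α) : Ideal F where
  carrier := {f | Tendsto (f : α →ᵇ ℂ) l (𝓝 0)}
  zero_mem' := tendsto_const_nhds
  add_mem' hf hg := by
    have := hf.add hg
    rwa [add_zero] at this
  smul_mem' c f hf := by
    have hc : IsBoundedUnder (· ≤ ·) l (norm ∘ (c : α →ᵇ ℂ)) :=
      isBoundedUnder_of ⟨‖(c : α →ᵇ ℂ)‖, fun x => norm_coe_le_norm _ x⟩
    exact isBoundedUnder_le_mul_tendsto_zero hc hf

variable {F}

lemma isClosed_tendstoZeroIdeal (l : Filter α) : IsClosed (tendstoZeroIdeal F l : Set F) :=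
  (isClosed_setOf_tendsto l 0).preimage continuous_subtype_val

lemma tendstoZeroIdeal_ne_top (l : Filter α) [l.NeBot] : tendstoZeroIdeal F l ≠ ⊤ := by
  intro h
  have : Tendsto (fun _ => (1 : ℂ)) l (𝓝 0) := (h ▸ Submodule.mem_top : (1 : F) ∈ _)
  exact one_ne_zero (tendsto_const_nhds_iff.1 this)

lemma genFilter_BIdeal_tendstoZeroIdeal {φ : Set (Set α)} (hφ : FFilter F φ) :
    genFilter (BIdeal F (tendstoZeroIdeal F hφ.1.toFilter)) = φ := by
  have hup := hφ.1.2.2.1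
  ext A
  constructor
  · rintro ⟨_, ⟨f, hf, r, hr, rfl⟩, hA⟩
    exact hup _ ((tendsto_nhds_zero_iff_XSet_mem _ _).1 hf r hr) A hA
  · intro hA
    by_cases hAu : A = univ
    · exact ⟨_, ⟨0, zero_mem _, 1, one_pos, rfl⟩, by simp [hAu]⟩
    obtain ⟨B, hB, f, hfF, hfB, hfA⟩ := hφ.2.2.2 A hA hAu
    have hfI : (⟨f, hfF⟩ : F) ∈ tendstoZeroIdeal F hφ.1.toFilter :=
      tendsto_const_nhds.congr' (mem_of_superset hB fun x hx => (hfB x hx).symm)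
    refine ⟨_, ⟨_, hfI, 1 / 2, by norm_num, rfl⟩, fun x hx => ?_⟩
    by_contra hxA
    have : ‖f x‖ ≤ 1 / 2 := hx
    norm_num [hfA x hxA] at this

end

section

variable {α : Type*} [TopologicalSpace α] {F : StarSubalgebra ℂ (α →ᵇ ℂ)} {I : Ideal F}

lemma XSet_nonempty_of_mem (hF : IsClosed (F : Set (α →ᵇ ℂ))) (hI : I ≠ ⊤) {f : F} (hf : f ∈ I)
    {r : ℝ} (hr : 0 < r) : (XSet (f : α →ᵇ ℂ) r).Nonempty := by
  by_contra hempty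
  have hlt : ∀ x, r ≤ ‖(f : α →ᵇ ℂ) x‖ := fun x => (not_le.1 fun hx => hempty ⟨x, hx⟩).le
  have hunit : IsUnit f :=
    (StarSubalgebra.coe_isUnit F (hS := hF)).1 (isUnit_of_le_norm hr hlt)
  exact hI (I.eq_top_of_isUnit_mem hf hunit)

lemma norm_star_mul_self_add_star_mul_self_apply (f g : α →ᵇ ℂ) (x : α) :
    ‖(star f * f + star g * g) x‖ = ‖f x‖ ^ 2 + ‖g x‖ ^ 2 := by
  have : (star f * f + star g * g) x = ((‖f x‖ ^ 2 + ‖g x‖ ^ 2 : ℝ) : ℂ) := by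
    simp [← Complex.conj_mul']
  rw [this, Complex.norm_real, Real.norm_of_nonneg (by positivity)]

lemma exists_BIdeal_subset_inter {A B : Set α} (hA : A ∈ BIdeal F I) (hB : B ∈ BIdeal F I) :
    ∃ C ∈ BIdeal F I, C ⊆ A ∩ B := by
  obtain ⟨f, hf, r, hr, rfl⟩ := hA
  obtain ⟨g, hg, s, hs, rfl⟩ := hB
  have hmem : star f * f + star g * g ∈ I := add_mem (I.mul_mem_left _ hf) (I.mul_mem_left _ hg)
  refine ⟨_, ⟨_, hmem, min r s ^ 2, by positivity, rfl⟩, fun x hx => ?_⟩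
  have hx : ‖(star (f : α →ᵇ ℂ) * f + star (g : α →ᵇ ℂ) * g) x‖ ≤ min r s ^ 2 := hx
  rw [norm_star_mul_self_add_star_mul_self_apply] at hx
  have hmin : 0 ≤ min r s := le_min hr.le hs.le
  exact ⟨(le_of_sq_le_sq (by nlinarith) hmin).trans (min_le_left r s),
    (le_of_sq_le_sq (by nlinarith) hmin).trans (min_le_right r s)⟩

lemma isFilterBase_BIdeal (hF : IsClosed (F : Set (α →ᵇ ℂ))) (hI : I ≠ ⊤) :
    IsFilterBase (BIdeal F I) := by
  refine ⟨⟨_, 0, zero_mem I, 1, one_pos, rfl⟩, ?_,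
    fun A hA B hB => exists_BIdeal_subset_inter hA hB⟩
  rintro ⟨f, hf, r, hr, hempty⟩
  exact (XSet_nonempty_of_mem hF hI hf hr).ne_empty hempty.symm

lemma fFamily_genFilter_BIdeal (hF : IsClosed (F : Set (α →ᵇ ℂ))) (hI : I ≠ ⊤) :
    FFamily F (genFilter (BIdeal F I)) := by
  refine ⟨(isFilterBase_BIdeal hF hI).isSetFilter_genFilter.1, ?_, ?_⟩
  · rintro A ⟨_, ⟨f, hf, r, hr, rfl⟩, hA⟩
    exact (XSet_nonempty_of_mem hF hI hf hr).mono hA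
  · rintro A ⟨_, ⟨g, hg, r, hr, rfl⟩, hA⟩ -
    obtain ⟨f, hfF, hf0, hf1⟩ := F.exists_mem_eq_zero_eq_one hF g.2 (half_lt_self hr)
    refine ⟨_, ⟨_, ⟨g, hg, r / 2, half_pos hr, rfl⟩, subset_rfl⟩, f, hfF, hf0, fun x hx => ?_⟩
    exact hf1 x (not_le.1 fun hxr => hx (hA hxr)).le

end

theorem stmt18 (F : StarSubalgebra ℂ (BoundedContinuousFunction X ℂ)) (hF : IsClosed (F : Set (BoundedContinuousFunction X ℂ))) :
    (∀ φ : Set (Set X), FFilter F φ →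
      ∃ I : Ideal F, IsClosed (I : Set F) ∧ I ≠ ⊤ ∧ φ = genFilter (BIdeal F I)) ∧
    ∀ I : Ideal F, IsClosed (I : Set F) → I ≠ ⊤ →
      IsFilterBase (BIdeal F I) ∧ FFilter F (genFilter (BIdeal F I)) := by
  refine ⟨fun φ hφ => ?_, fun I _ hI => ?_⟩
  · haveI := hφ.1.neBot_toFilter
    exact ⟨_, isClosed_tendstoZeroIdeal _, tendstoZeroIdeal_ne_top _,
      (genFilter_BIdeal_tendstoZeroIdeal hφ).symm⟩
  · have hbase := isFilterBase_BIdeal hF hI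
    exact ⟨hbase, hbase.isSetFilter_genFilter, fFamily_genFilter_BIdeal hF hI⟩
end
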